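/- arXiv:0901.4698 — 2 statements merged into one kernel-verified Lean document; each statement's English description precedes it below -/
import Mathlib

section
/- Let s[n,k] be the q-Stirling numbers of the first kind defined by s[n+1,k] = s[n,k-1] - [n]·s[n,k] with s[0,k] = δ_{k0} and s[n,0] = δ_{n0}. Then sum_{k=0}^n s[n,k]·x^k = product_{j=0}^{n-1} (x - [j]), and the Hankel determinant of these polynomials ⟨x⟩_n = product_{j=0}^{n-1}(x-[j]) satisfies det(⟨x⟩_{i+j})_{i,j=0}^{n-1} = (-1)^{C(n,2)} · q^{2·C(n,3)} · product_{j=0}^{n-1} ([j]! · ⟨x⟩_j). -/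
open Finset Matrix

/-- The q-integer `[n] = 1 + q + ... + q^(n-1)`. -/
def qint {R : Type*} [CommRing R] (q : R) (n : ℕ) : R := ∑ i ∈ Finset.range n, q ^ i

/-- The q-factorial `[n]! = [1][2]⋯[n]`. -/
def qfact {R : Type*} [CommRing R] (q : R) (n : ℕ) : R := ∏ i ∈ Finset.range n, qint q (i + 1)

/-- The Gaussian binomial coefficient, via the q-Pascal recurrence. -/
def qbinom {R : Type*} [CommRing R] (q : R) : ℕ → ℕ → R
  | 0, 0 => 1
  | 0, _ + 1 => 0
  | _ + 1, 0 => 1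
  | n + 1, k + 1 => qbinom q n k + q ^ (k + 1) * qbinom q n (k + 1)

/-- The q-Stirling numbers of the second kind:
`S[n,k] = S[n-1,k-1] + [k]·S[n-1,k]`, `S[0,k] = δ_{k0}`, `S[n,0] = δ_{n0}`. -/
def qStirling2 {R : Type*} [CommRing R] (q : R) : ℕ → ℕ → R
  | 0, 0 => 1
  | 0, _ + 1 => 0
  | _ + 1, 0 => 0
  | n + 1, k + 1 => qStirling2 q n k + qint q (k + 1) * qStirling2 q n (k + 1)

/-- The q-Pochhammer symbol `(a;q)_m = ∏_{j<m} (1 - q^j a)`. -/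
def qpoch {R : Type*} [CommRing R] (q a : R) (m : ℕ) : R := ∏ j ∈ Finset.range m, (1 - q ^ j * a)

/-- The q-Stirling numbers of the first kind:
`s[n+1,k] = s[n,k-1] - [n]·s[n,k]`, `s[0,k] = δ_{k0}`, `s[n,0] = δ_{n0}`. -/
def qStirling1 {R : Type*} [CommRing R] (q : R) : ℕ → ℕ → R
  | 0, 0 => 1
  | 0, _ + 1 => 0
  | n + 1, 0 => -(qint q n) * qStirling1 q n 0
  | n + 1, k + 1 => qStirling1 q n k - qint q n * qStirling1 q n (k + 1)

section Aux

open Polynomial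

variable {R : Type*} [CommRing R]

lemma qint_add (q : R) (a b : ℕ) : qint q (a + b) = qint q a + q ^ a * qint q b := by
  simp only [qint, Finset.sum_range_add, pow_add, Finset.mul_sum]

lemma qS1_zero (q : R) (n k : ℕ) (h : n < k) : qStirling1 q n k = 0 := by
  induction n generalizing k with
  | zero => cases k with | zero => omega | succ k => rfl
  | succ n ih =>
    cases k with
    | zero => omega
    | succ k =>
      show qStirling1 q n k - qint q n * qStirling1 q n (k + 1) = 0
      rw [ih k (by omega), ih (k + 1) (by omega)]
      ring

lemma qS1_part1 (q x : R) (n : ℕ) :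
    ∑ k ∈ Finset.range (n + 1), qStirling1 q n k * x ^ k =
      ∏ j ∈ Finset.range n, (x - qint q j) := by
  induction n with
  | zero => simp [qStirling1]
  | succ n ih =>
    set S := ∑ k ∈ Finset.range (n + 1), qStirling1 q n k * x ^ k with hS
    have key : ∑ k ∈ Finset.range (n + 1), qStirling1 q n (k + 1) * x ^ (k + 1)
        = S - qStirling1 q n 0 := by
      have h1 := Finset.sum_range_succ' (fun k => qStirling1 q n k * x ^ k) (n + 1)
      have h2 := Finset.sum_range_succ (fun k => qStirling1 q n k * x ^ k) (n + 1)
      rw [qS1_zero q n (n + 1) (by omega)] at h2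
      simp only [zero_mul, add_zero] at h2
      rw [h2, ← hS] at h1
      simp only [pow_zero, mul_one] at h1
      linear_combination -h1
    rw [Finset.prod_range_succ, ← ih]
    rw [Finset.sum_range_succ' (fun k => qStirling1 q (n + 1) k * x ^ k) (n + 1)]
    have e1 : ∀ k, qStirling1 q (n + 1) (k + 1)
        = qStirling1 q n k - qint q n * qStirling1 q n (k + 1) := fun k => rfl
    have e0 : qStirling1 q (n + 1) 0 = -(qint q n) * qStirling1 q n 0 := rfl
    simp only [e1, e0, sub_mul, Finset.sum_sub_distrib, pow_zero, mul_one]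
    have h3 : ∑ k ∈ Finset.range (n + 1), qStirling1 q n k * x ^ (k + 1) = x * S := by
      rw [hS, Finset.mul_sum]
      exact Finset.sum_congr rfl fun k _ => by ring
    have h4 : ∑ k ∈ Finset.range (n + 1), qint q n * qStirling1 q n (k + 1) * x ^ (k + 1)
        = qint q n * (S - qStirling1 q n 0) := by
      rw [← key, Finset.mul_sum]
      exact Finset.sum_congr rfl fun k _ => by ring
    rw [h3, h4]
    ring

/-- Hockey stick. -/
lemma sum_range_choose_eq (k n : ℕ) : ∑ i ∈ Finset.range n, i.choose k = n.choose (k + 1) := by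
  induction n with
  | zero => simp
  | succ n ih => rw [Finset.sum_range_succ, ih, Nat.choose_succ_succ, Nat.add_comm]

lemma prod_Ioi_fin_eq_range {M : Type*} [CommMonoid M] :
    ∀ (n : ℕ) (g : ℕ → ℕ → M),
      (∏ i : Fin n, ∏ j ∈ Finset.Ioi i, g (i : ℕ) (j : ℕ))
        = ∏ j ∈ Finset.range n, ∏ i ∈ Finset.range j, g i j := by
  intro n
  induction n with
  | zero => simp
  | succ n ih =>
    intro g
    rw [Fin.prod_univ_succ]
    have h0 : (∏ j ∈ Finset.Ioi (0 : Fin (n + 1)), g ((0 : Fin (n+1)) : ℕ) (j : ℕ))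
        = ∏ j ∈ Finset.range n, g 0 (j + 1) := by
      rw [Fin.prod_Ioi_zero, ← Fin.prod_univ_eq_prod_range]
      simp [Fin.val_succ]
    have h1 : (∏ i : Fin n, ∏ j ∈ Finset.Ioi i.succ, g (i.succ : ℕ) (j : ℕ))
        = ∏ j ∈ Finset.range n, ∏ i ∈ Finset.range j, g (i + 1) (j + 1) := by
      rw [← ih (fun i j => g (i + 1) (j + 1))]
      refine Finset.prod_congr rfl fun i _ => ?_
      rw [Fin.prod_Ioi_succ]
      exact Finset.prod_congr rfl fun j _ => by simp [Fin.val_succ]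
    rw [h0, h1, ← Finset.prod_mul_distrib]
    rw [Finset.prod_range_succ' (fun j => ∏ i ∈ Finset.range j, g i j) n]
    simp only [Finset.range_zero, Finset.prod_empty, mul_one]
    refine Finset.prod_congr rfl fun j _ => ?_
    rw [Finset.prod_range_succ' (fun i => g i (j + 1)) j]
    exact mul_comm _ _

lemma qint_sub (q : R) {i j : ℕ} (h : i ≤ j) :
    qint q j - qint q i = q ^ i * qint q (j - i) := by
  have hj : qint q j = qint q i + q ^ i * qint q (j - i) := by
    conv_lhs => rw [show j = i + (j - i) from by omega]
    rw [qint_add]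
  linear_combination hj

lemma prod_qint_sub (q : R) (j : ℕ) :
    ∏ i ∈ Finset.range j, (qint q j - qint q i) = q ^ j.choose 2 * qfact q j := by
  have h1 : ∏ i ∈ Finset.range j, (qint q j - qint q i)
      = ∏ i ∈ Finset.range j, q ^ i * qint q (j - i) := by
    refine Finset.prod_congr rfl fun i hi => ?_
    exact qint_sub q (le_of_lt (Finset.mem_range.mp hi))
  rw [h1, Finset.prod_mul_distrib, Finset.prod_pow_eq_pow_sum]
  have hs : ∑ i ∈ Finset.range j, i = j.choose 2 := by
    have := sum_range_choose_eq 1 j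
    simpa using this
  have hf : ∏ i ∈ Finset.range j, qint q (j - i) = qfact q j := by
    rw [qfact, ← Finset.prod_range_reflect (fun i => qint q (i + 1)) j]
    refine Finset.prod_congr rfl fun i hi => ?_
    have : j - 1 - i + 1 = j - i := by
      have := Finset.mem_range.mp hi; omega
    rw [this]
  rw [hs, hf]

/-- Leading coefficient of a product of linear factors. -/
lemma prod_linear_coeff (a b : ℕ → R) (j : ℕ) :
    (∏ l ∈ Finset.range j, (Polynomial.C (a l) - Polynomial.C (b l) * Polynomial.X)).natDegree ≤ j ∧
      (∏ l ∈ Finset.range j, (Polynomial.C (a l) - Polynomial.C (b l) * Polynomial.X)).coeff j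
        = ∏ l ∈ Finset.range j, (-(b l)) := by
  induction j with
  | zero => simp
  | succ j ih =>
    obtain ⟨hd, hc⟩ := ih
    set P := ∏ l ∈ Finset.range j, (Polynomial.C (a l) - Polynomial.C (b l) * Polynomial.X) with hP
    have hfac : (Polynomial.C (a j) - Polynomial.C (b j) * Polynomial.X).natDegree ≤ 1 := by
      refine le_trans (Polynomial.natDegree_sub_le _ _) ?_
      simp [Polynomial.natDegree_C_mul_le, Polynomial.natDegree_X_le]
      exact le_trans (Polynomial.natDegree_mul_le) (by simp [Polynomial.natDegree_X_le])
    constructor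
    · rw [Finset.prod_range_succ, ← hP]
      exact le_trans (Polynomial.natDegree_mul_le) (by omega)
    · rw [Finset.prod_range_succ, ← hP, Finset.prod_range_succ, ← hc]
      have expand : P * (Polynomial.C (a j) - Polynomial.C (b j) * Polynomial.X)
          = P * Polynomial.C (a j) - P * Polynomial.C (b j) * Polynomial.X := by ring
      rw [expand, Polynomial.coeff_sub, Polynomial.coeff_mul_C, Polynomial.coeff_mul_X,
        Polynomial.coeff_mul_C]
      rw [Polynomial.coeff_eq_zero_of_natDegree_lt (lt_of_le_of_lt hd (Nat.lt_succ_self j))]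
      ring

end Aux

/-- `∑_k s[n,k] x^k = ∏_{j<n} (x - [j])`, and the Hankel determinant of these
polynomials `⟨x⟩_n` equals `(-1)^C(n,2) q^(2 C(n,3)) ∏_j [j]! ⟨x⟩_j`. -/
theorem qStirling1_poly_and_hankel {R : Type*} [CommRing R] (q x : R) (n : ℕ) :
    (∑ k ∈ Finset.range (n + 1), qStirling1 q n k * x ^ k =
        ∏ j ∈ Finset.range n, (x - qint q j)) ∧
      (Matrix.of fun i j : Fin n =>
          ∏ l ∈ Finset.range ((i : ℕ) + (j : ℕ)), (x - qint q l)).det =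
        (-1 : R) ^ n.choose 2 * q ^ (2 * n.choose 3) *
          ∏ j ∈ Finset.range n, qfact q j * ∏ l ∈ Finset.range j, (x - qint q l) := by
  constructor
  · exact qS1_part1 q x n
  · -- the polynomials p j
    classical
    set p : Fin n → Polynomial R := fun j =>
      ∏ l ∈ Finset.range (j : ℕ), (Polynomial.C (x - qint q l) - Polynomial.C (q ^ l) * Polynomial.X)
      with hp
    have hdeg : ∀ j : Fin n, (p j).natDegree ≤ (j : ℕ) :=
      fun j => (prod_linear_coeff (fun l => x - qint q l) (fun l => q ^ l) (j : ℕ)).1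
    have hcoeff : ∀ j : Fin n, (p j).coeff (j : ℕ) = ∏ l ∈ Finset.range (j : ℕ), (-(q ^ l)) :=
      fun j => (prod_linear_coeff (fun l => x - qint q l) (fun l => q ^ l) (j : ℕ)).2
    -- entrywise factorization
    have entry : ∀ i j : Fin n,
        ∏ l ∈ Finset.range ((i : ℕ) + (j : ℕ)), (x - qint q l)
          = (∏ l ∈ Finset.range (i : ℕ), (x - qint q l)) * (p j).eval (qint q (i : ℕ)) := by
      intro i j
      rw [Finset.prod_range_add, hp]
      congr 1
      rw [Polynomial.eval_prod]
      refine Finset.prod_congr rfl fun l _ => ?_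
      simp only [Polynomial.eval_sub, Polynomial.eval_C, Polynomial.eval_mul, Polynomial.eval_X]
      rw [Nat.add_comm (i : ℕ) l, qint_add]
      ring
    have step1 : (Matrix.of fun i j : Fin n =>
        ∏ l ∈ Finset.range ((i : ℕ) + (j : ℕ)), (x - qint q l)).det
        = (∏ i : Fin n, ∏ l ∈ Finset.range (i : ℕ), (x - qint q l)) *
          (Matrix.of fun i j : Fin n => (p j).eval (qint q (i : ℕ))).det := by
      rw [← Matrix.det_mul_column]
      congr 1
      ext i j
      simp only [Matrix.of_apply]
      exact entry i j
    rw [step1]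
    rw [Matrix.eval_matrixOfPolynomials_eq_vandermonde_mul_matrixOfPolynomials
        (fun i : Fin n => qint q (i : ℕ)) p hdeg, Matrix.det_mul]
    -- the vandermonde determinant
    have hvand : (Matrix.vandermonde fun i : Fin n => qint q (i : ℕ)).det
        = q ^ n.choose 3 * ∏ j ∈ Finset.range n, qfact q j := by
      rw [Matrix.det_vandermonde]
      rw [prod_Ioi_fin_eq_range n (fun i j => qint q j - qint q i)]
      have : ∀ j ∈ Finset.range n, ∏ i ∈ Finset.range j, (qint q j - qint q i)
          = q ^ j.choose 2 * qfact q j := fun j _ => prod_qint_sub q j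
      rw [Finset.prod_congr rfl this, Finset.prod_mul_distrib, Finset.prod_pow_eq_pow_sum,
        sum_range_choose_eq]
    -- the triangular determinant
    have htri : (Matrix.of fun i j : Fin n => (p j).coeff (i : ℕ)).det
        = (-1 : R) ^ n.choose 2 * q ^ n.choose 3 := by
      have hut : (Matrix.of fun i j : Fin n => (p j).coeff (i : ℕ)).BlockTriangular id := by
        intro i j hij
        simp only [Matrix.of_apply, id] at *
        exact Polynomial.coeff_eq_zero_of_natDegree_lt
          (lt_of_le_of_lt (hdeg j) (by exact_mod_cast hij))
      rw [Matrix.det_of_upperTriangular hut]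
      have : ∀ i : Fin n, (Matrix.of fun i j : Fin n => (p j).coeff (i : ℕ)) i i
          = (-1 : R) ^ (i : ℕ) * q ^ (i : ℕ).choose 2 := by
        intro i
        simp only [Matrix.of_apply]
        rw [hcoeff i]
        have : ∀ l ∈ Finset.range (i : ℕ), -(q ^ l) = (-1) * q ^ l := fun l _ => by ring
        rw [Finset.prod_congr rfl this, Finset.prod_mul_distrib, Finset.prod_const,
          Finset.card_range, Finset.prod_pow_eq_pow_sum]
        have hsum : ∑ l ∈ Finset.range (i : ℕ), l = (i : ℕ).choose 2 := by
          simpa using sum_range_choose_eq 1 (i : ℕ)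
        rw [hsum]
      rw [Finset.prod_congr rfl (fun i _ => this i), Finset.prod_mul_distrib]
      rw [Fin.prod_univ_eq_prod_range (fun i => (-1 : R) ^ i),
        Fin.prod_univ_eq_prod_range (fun i => q ^ (i).choose 2),
        Finset.prod_pow_eq_pow_sum, Finset.prod_pow_eq_pow_sum, sum_range_choose_eq]
      have hsum : ∑ i ∈ Finset.range n, i = n.choose 2 := by
        simpa using sum_range_choose_eq 1 n
      rw [hsum]
    rw [hvand, htri]
    rw [Fin.prod_univ_eq_prod_range (fun i => ∏ l ∈ Finset.range i, (x - qint q l))]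
    rw [Finset.prod_mul_distrib]
    ring
end

section
/- The polynomials Φ_n(x) = sum_{k=0}^n q^{C(k,2)}·S[n,k]·x^k satisfy the recurrence Φ_{n+1}(x) = x · sum_{k=0}^n C(n,k) · q^k · Φ_k(x). -/
open Finset Matrix

lemma qint_succ {R : Type*} [CommRing R] (q : R) (k : ℕ) :
    qint q (k + 1) = 1 + q * qint q k := by
  simp [qint, Finset.sum_range_succ', Finset.mul_sum, pow_succ, mul_comm, add_comm]

lemma qS_zero {R : Type*} [CommRing R] (q : R) (n k : ℕ) (h : n < k) :
    qStirling2 q n k = 0 := by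
  induction n generalizing k with
  | zero => cases k with
    | zero => omega
    | succ k => simp [qStirling2]
  | succ n ih =>
    cases k with
    | zero => omega
    | succ k =>
      rw [qStirling2, ih k (by omega), ih (k+1) (by omega)]
      ring

lemma key {F : Type*} [Field F] (q : F) (n k : ℕ) :
    ∑ m ∈ Finset.range (n + 1), (n.choose m : F) * q ^ m * qStirling2 q m k =
      q ^ k * qStirling2 q (n + 1) (k + 1) := by
  induction n generalizing k with
  | zero =>
    cases k with
    | zero => simp [qStirling2, qint]
    | succ k => simp [qStirling2]
  | succ n ih =>
    rw [Finset.sum_range_succ']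
    have e1 : ∀ m ∈ Finset.range (n + 1),
        ((n+1).choose (m+1) : F) * q ^ (m+1) * qStirling2 q (m+1) k =
        (n.choose m : F) * q ^ (m+1) * qStirling2 q (m+1) k +
        (n.choose (m+1) : F) * q ^ (m+1) * qStirling2 q (m+1) k := by
      intro m _
      rw [Nat.choose_succ_succ]
      push_cast
      ring
    rw [Finset.sum_congr rfl e1, Finset.sum_add_distrib]
    have e2 : ∑ m ∈ Finset.range (n + 1), (n.choose (m+1) : F) * q ^ (m+1) * qStirling2 q (m+1) k
        + ((n+1).choose 0 : F) * q ^ 0 * qStirling2 q 0 k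
        = q ^ k * qStirling2 q (n + 1) (k + 1) := by
      have h0 := Finset.sum_range_succ' (fun m => (n.choose m : F) * q ^ m * qStirling2 q m k) (n+1)
      simp only [Nat.choose_zero_right, Nat.cast_one, pow_zero, one_mul] at h0 ⊢
      rw [← h0, Finset.sum_range_succ, Nat.choose_succ_self]
      simpa using ih k
    rw [add_assoc, e2]
    cases k with
    | zero =>
      have hz : ∀ m ∈ Finset.range (n + 1),
          (n.choose m : F) * q ^ (m+1) * qStirling2 q (m+1) 0 = 0 := by
        intro m _; simp [qStirling2]
      rw [Finset.sum_congr rfl hz]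
      simp only [Finset.sum_const_zero, zero_add, pow_zero, one_mul]
      have hs : qStirling2 q (n+1+1) (0+1) = qStirling2 q (n+1) 1 := by
        rw [qStirling2]; simp [qStirling2, qint]
      exact hs.symm
    | succ k =>
      have e3 : ∀ m ∈ Finset.range (n + 1),
          (n.choose m : F) * q ^ (m+1) * qStirling2 q (m+1) (k+1) =
          q * ((n.choose m : F) * q ^ m * qStirling2 q m k) +
          (q * qint q (k+1)) * ((n.choose m : F) * q ^ m * qStirling2 q m (k+1)) := by
        intro m _
        rw [qStirling2]
        ring
      rw [Finset.sum_congr rfl e3, Finset.sum_add_distrib, ← Finset.mul_sum, ← Finset.mul_sum,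
        ih k, ih (k+1)]
      have hs : qStirling2 q (n+1+1) (k+1+1) =
          qStirling2 q (n+1) (k+1) + qint q (k+1+1) * qStirling2 q (n+1) (k+1+1) := rfl
      rw [hs, qint_succ q (k+1)]
      ring

/-- `Φ_(n+1)(x) = x ∑_k C(n,k) q^k Φ_k(x)`. -/
theorem qexp2_binomial_recurrence {F : Type*} [Field F] (q x : F) (n : ℕ) :
    ∑ k ∈ Finset.range (n + 2), q ^ k.choose 2 * qStirling2 q (n + 1) k * x ^ k =
      x * ∑ k ∈ Finset.range (n + 1), (n.choose k : F) * q ^ k *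
        ∑ j ∈ Finset.range (k + 1), q ^ j.choose 2 * qStirling2 q k j * x ^ j := by
  rw [Finset.mul_sum]
  have step : ∀ k ∈ Finset.range (n + 1),
      x * ((n.choose k : F) * q ^ k *
        ∑ j ∈ Finset.range (k + 1), q ^ j.choose 2 * qStirling2 q k j * x ^ j)
      = ∑ j ∈ Finset.range (n + 1),
          x * (q ^ j.choose 2 * x ^ j * ((n.choose k : F) * q ^ k * qStirling2 q k j)) := by
    intro k hk
    have hsub : ∑ j ∈ Finset.range (k + 1), q ^ j.choose 2 * qStirling2 q k j * x ^ j
        = ∑ j ∈ Finset.range (n + 1), q ^ j.choose 2 * qStirling2 q k j * x ^ j := by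
      apply Finset.sum_subset
      · intro j hj; simp only [Finset.mem_range] at hj hk ⊢; omega
      · intro j _ hj'
        simp only [Finset.mem_range, not_lt] at hj'
        rw [qS_zero q k j (by omega)]
        ring
    rw [hsub, Finset.mul_sum, Finset.mul_sum]
    apply Finset.sum_congr rfl
    intro j _
    ring
  rw [Finset.sum_congr rfl step, Finset.sum_comm]
  have e : ∀ j ∈ Finset.range (n + 1),
      (∑ k ∈ Finset.range (n + 1),
        x * (q ^ j.choose 2 * x ^ j * ((n.choose k : F) * q ^ k * qStirling2 q k j)))
      = q ^ (j+1).choose 2 * qStirling2 q (n + 1) (j + 1) * x ^ (j + 1) := by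
    intro j _
    have : (∑ k ∈ Finset.range (n + 1),
        x * (q ^ j.choose 2 * x ^ j * ((n.choose k : F) * q ^ k * qStirling2 q k j)))
        = x * (q ^ j.choose 2 * x ^ j) *
          ∑ k ∈ Finset.range (n + 1), (n.choose k : F) * q ^ k * qStirling2 q k j := by
      rw [Finset.mul_sum]
      apply Finset.sum_congr rfl
      intro k _
      ring
    rw [this, key, Nat.choose_succ_succ, Nat.choose_one_right, pow_add]
    ring
  rw [Finset.sum_congr rfl e,
    Finset.sum_range_succ' (fun k => q ^ k.choose 2 * qStirling2 q (n + 1) k * x ^ k)]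
  simp [qStirling2]
end
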